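/- Let A be a (possibly graded) ring, and let 0 → Z → P → M → 0 be a short exact sequence of A-modules with P projective. If every A-module homomorphism from P to M annihilates Z (i.e., vanishes on the image of Z in P), then M is a projective module over the quotient ring A/Ann_A(M), where Ann_A(M) is the annihilator of M in A. -/
import Mathlib


/-!
STATEMENT 0 (Lemma 2.2 / BDK 4.3.1): Let `A` be a ring and `0 → Z → P → M → 0` a short
exact sequence of `A`-modules with `P` projective. If every `A`-module homomorphism
`P → M` annihilates (the image of) `Z`, then `M` is projective over `A / Ann_A(M)`.
Since `A` is not assumed commutative, the quotient `A/Ann_A(M)` is encoded by a ring `B`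
together with a surjective ring homomorphism `π : A → B` whose kernel is exactly the
annihilator of `M`, and a compatible `B`-module structure on `M`.
-/

theorem stmt0 (A : Type) [Ring A]
    (Z P M : Type) [AddCommGroup Z] [AddCommGroup P] [AddCommGroup M]
    [Module A Z] [Module A P] [Module A M]
    [Module.Projective A P]
    (f : Z →ₗ[A] P) (g : P →ₗ[A] M)
    (hf : Function.Injective f) (hg : Function.Surjective g)
    (hexact : LinearMap.range f = LinearMap.ker g)
    (hann : ∀ (φ : P →ₗ[A] M) (z : Z), φ (f z) = 0)
    (B : Type) [Ring B] (π : A →+* B) (hπ : Function.Surjective π)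
    (hker : ∀ x : A, π x = 0 ↔ ∀ m : M, x • m = 0)
    [Module B M] (hcompat : ∀ (x : A) (m : M), π x • m = x • m) :
    Module.Projective B M := by
  classical
  -- view `M →₀ B` as an `A`-module via `π`
  letI : Module A (M →₀ B) := Module.compHom (M →₀ B) π
  have hsmul : ∀ (a : A) (x : M →₀ B), a • x = π a • x := fun a x => rfl
  -- the total map `(M →₀ B) → M` as an `A`-linear map
  let τ : (M →₀ B) →ₗ[A] M :=
    { toFun := Finsupp.linearCombination B (id : M → M)
      map_add' := fun x y => map_add _ x y
      map_smul' := by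
        intro a x
        show Finsupp.linearCombination B (id : M → M) (π a • x) = a • Finsupp.linearCombination B (id : M → M) x
        rw [map_smul, hcompat] }
  have hτ : Function.Surjective τ := by
    intro m
    refine ⟨Finsupp.single m 1, ?_⟩
    show Finsupp.linearCombination B (id : M → M) (Finsupp.single m 1) = m
    simp
  obtain ⟨h, hh⟩ := Module.projective_lifting_property τ g hτ
  -- `h` vanishes on the image of `Z`
  have hz : ∀ z : Z, h (f z) = 0 := by
    intro z
    ext m'
    obtain ⟨a, ha⟩ := hπ ((h (f z)) m')
    rw [Finsupp.zero_apply, ← ha, hker]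
    intro x
    let φ : P →ₗ[A] M :=
      { toFun := fun p => (h p) m' • x
        map_add' := by
          intro p q
          show (h (p + q)) m' • x = (h p) m' • x + (h q) m' • x
          rw [map_add, Finsupp.add_apply, add_smul]
        map_smul' := by
          intro b p
          show (h (b • p)) m' • x = b • ((h p) m' • x)
          rw [map_smul, hsmul, Finsupp.smul_apply, smul_eq_mul, mul_smul, hcompat] }
    have := hann φ z
    rw [← hcompat, ha]
    exact this
  -- factor `h` through `M`
  have hker' : LinearMap.ker g ≤ LinearMap.ker h := by
    rw [← hexact]
    rintro _ ⟨z, rfl⟩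
    exact hz z
  let e : (P ⧸ LinearMap.ker g) ≃ₗ[A] M := g.quotKerEquivOfSurjective hg
  let h' : (P ⧸ LinearMap.ker g) →ₗ[A] (M →₀ B) := (LinearMap.ker g).liftQ h hker'
  let σA : M →ₗ[A] (M →₀ B) := h'.comp (e.symm : M →ₗ[A] (P ⧸ LinearMap.ker g))
  have hσA : ∀ p : P, σA (g p) = h p := by
    intro p
    have he : e (Submodule.Quotient.mk p) = g p := rfl
    have : e.symm (g p) = Submodule.Quotient.mk p := by
      rw [← he, LinearEquiv.symm_apply_apply]
    show h' (e.symm (g p)) = h p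
    rw [this]
    rfl
  -- promote to a `B`-linear map
  let σ : M →ₗ[B] (M →₀ B) :=
    { toFun := σA
      map_add' := map_add σA
      map_smul' := by
        intro b m
        obtain ⟨a, rfl⟩ := hπ b
        show σA (π a • m) = π a • σA m
        rw [hcompat, map_smul σA, hsmul] }
  refine Module.projective_def'.mpr ⟨σ, ?_⟩
  ext m
  obtain ⟨p, rfl⟩ := hg m
  show Finsupp.linearCombination B (id : M → M) (σA (g p)) = g p
  rw [hσA]
  exact LinearMap.congr_fun hh p
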